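/- arXiv:2306.17303 — 2 statements merged into one kernel-verified Lean document; each statement's English description precedes it below -/
import Mathlib

section
/- Every nontrivial element of the subgroup of PGL_3(C) generated by the images of the permutation matrix A (e_1↦e_2↦e_3↦e_1) and B = diag(1, w, w^2), where w = e^{2πi/3}, has a matrix representative with 3 distinct eigenvalues. -/
/-!
Since `B A = w • (A B)`, the images `a, b` of `A, B` commute in `PGL₃(ℂ)`; both have order 3,
so every element of the group they generate is `a ^ m * b ^ n`. Its representative
`M = A ^ m * B ^ n` satisfies `M * C = ζ • (C * M)` for a primitive cube root of unity `ζ`,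
with `C = A` when `3 ∣ m` (then `3 ∤ n`, as the element is nontrivial) and `C = B` otherwise.
Such a `C` maps a `μ`-eigenvector of `M` to a `ζ μ`-eigenvector, so `μ, ζ μ, ζ² μ` are three
distinct eigenvalues of `M`, where `μ ≠ 0` is any eigenvalue.
-/

open Matrix

abbrev PGL3 : Type := GL (Fin 3) ℂ ⧸ Subgroup.center (GL (Fin 3) ℂ)

noncomputable abbrev pgl3mk : GL (Fin 3) ℂ →* PGL3 :=
  QuotientGroup.mk' (Subgroup.center (GL (Fin 3) ℂ))

section TwistedCommutation

variable {S R : Type*} [CommSemiring S] [Semiring R] [Algebra S R] {x y : R} {s : S}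

theorem pow_mul_pow_eq_smul_of_mul_eq_smul (h : y * x = s • (x * y)) (i j : ℕ) :
    y ^ j * x ^ i = s ^ (i * j) • (x ^ i * y ^ j) := by
  have hy : y * x ^ i = s ^ i • (x ^ i * y) := by
    have := (SemiconjBy.pow_right (a := y) (x := x) (y := s • x)
      (by rw [SemiconjBy, smul_mul_assoc]; exact h) i).eq
    rwa [smul_pow, smul_mul_assoc] at this
  induction j with
  | zero => simp
  | succ j ih =>
    rw [pow_succ, mul_assoc, hy, mul_smul_comm, ← mul_assoc, ih, smul_mul_assoc, smul_smul,
      mul_assoc, ← pow_succ, ← pow_add, add_comm, mul_add_one]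

theorem pow_mul_pow_mul_eq_smul (h : y * x = s • (x * y)) (m n : ℕ) :
    x ^ m * y ^ n * x = s ^ n • (x * (x ^ m * y ^ n)) := by
  have hx := pow_mul_pow_eq_smul_of_mul_eq_smul h 1 n
  rw [pow_one, one_mul] at hx
  rw [mul_assoc, hx, mul_smul_comm, ← mul_assoc, ← mul_assoc, pow_mul_comm']

theorem pow_mul_pow_mul_eq_sq_smul (h : y * x = s • (x * y)) (hs : s ^ 3 = 1) (m n : ℕ) :
    x ^ m * y ^ n * y = (s ^ m) ^ 2 • (y * (x ^ m * y ^ n)) := by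
  have hy := pow_mul_pow_eq_smul_of_mul_eq_smul h m 1
  rw [pow_one, mul_one] at hy
  rw [← mul_assoc y, hy, smul_mul_assoc, smul_smul, ← pow_succ, ← pow_mul, mul_comm, pow_mul,
    hs, one_pow, one_smul, mul_assoc, mul_assoc, pow_mul_comm']

end TwistedCommutation

namespace Module.End

theorem HasEigenvalue.mul_of_mul_eq_smul_mul {R V : Type*} [CommRing R] [AddCommGroup V]
    [Module R V] {f c : End R V} {ζ μ : R} (hc : Function.Injective c) (h : f * c = ζ • (c * f))
    (hμ : f.HasEigenvalue μ) : f.HasEigenvalue (ζ * μ) := by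
  obtain ⟨v, hv⟩ := hμ.exists_hasEigenvector
  refine hasEigenvalue_of_hasEigenvector (x := c v) ⟨mem_eigenspace_iff.mpr ?_, ?_⟩
  · have := congrArg (· v) h
    simpa only [mul_apply, LinearMap.smul_apply, hv.apply_eq_smul, map_smul, smul_smul] using this
  · exact (map_ne_zero_iff c hc).mpr hv.2

theorem HasEigenvalue.ne_zero_of_injective {R V : Type*} [CommRing R] [AddCommGroup V]
    [Module R V] {f : End R V} {μ : R} (hf : Function.Injective f) (hμ : f.HasEigenvalue μ) :
    μ ≠ 0 := by
  rintro rfl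
  obtain ⟨v, hv⟩ := hμ.exists_hasEigenvector
  exact hv.2 (hf (by rw [hv.apply_eq_smul, zero_smul, map_zero]))

theorem exists_three_eigenvalues_of_mul_eq_smul_mul {K V : Type*} [Field K] [IsAlgClosed K]
    [AddCommGroup V] [Module K V] [FiniteDimensional K V] [Nontrivial V] {f c : End K V} {ζ : K}
    (hf : Function.Injective f) (hc : Function.Injective c) (hζ : IsPrimitiveRoot ζ 3)
    (h : f * c = ζ • (c * f)) :
    ∃ a b d : K, a ≠ b ∧ a ≠ d ∧ b ≠ d ∧
      f.HasEigenvalue a ∧ f.HasEigenvalue b ∧ f.HasEigenvalue d := by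
  obtain ⟨μ, hμ⟩ := f.exists_eigenvalue
  have hμ0 := hμ.ne_zero_of_injective hf
  have hζ0 : ζ ≠ 0 := hζ.ne_zero three_ne_zero
  have hζ1 : ζ ≠ 1 := hζ.ne_one (by norm_num)
  have hζ2 : ζ ^ 2 ≠ 1 := hζ.pow_ne_one_of_pos_of_lt two_ne_zero (by norm_num)
  have hζμ := hμ.mul_of_mul_eq_smul_mul hc h
  refine ⟨μ, ζ * μ, ζ ^ 2 * μ, ?_, ?_, ?_, hμ, hζμ, ?_⟩
  · exact fun hab => hζ1 (by simpa [hμ0] using hab.symm)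
  · exact fun had => hζ2 (by simpa [hμ0] using had.symm)
  · exact fun hbd => hζ1 (by simpa [pow_two, mul_assoc, hμ0, hζ0] using hbd.symm)
  · simpa [pow_two, mul_assoc] using hζμ.mul_of_mul_eq_smul_mul hc h

end Module.End

namespace Matrix

theorem exists_three_eigenvalues_of_mul_eq_smul_mul {n K : Type*} [Fintype n] [DecidableEq n]
    [Nonempty n] [Field K] [IsAlgClosed K] {M C : Matrix n n K} {ζ : K} (hM : IsUnit M)
    (hC : IsUnit C) (hζ : IsPrimitiveRoot ζ 3) (h : M * C = ζ • (C * M)) :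
    ∃ a b d : K, a ≠ b ∧ a ≠ d ∧ b ≠ d ∧ Module.End.HasEigenvalue M.mulVecLin a ∧
      Module.End.HasEigenvalue M.mulVecLin b ∧ Module.End.HasEigenvalue M.mulVecLin d := by
  refine Module.End.exists_three_eigenvalues_of_mul_eq_smul_mul (f := M.mulVecLin)
    (c := C.mulVecLin) (mulVec_injective_iff_isUnit.mpr hM) (mulVec_injective_iff_isUnit.mpr hC)
    hζ ?_
  refine LinearMap.ext fun v => ?_
  simp only [Module.End.mul_apply, LinearMap.smul_apply, mulVecLin_apply, mulVec_mulVec, h,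
    smul_mulVec]

theorem exists_three_eigenvalues_pow_mul_pow {n K : Type*} [Fintype n] [DecidableEq n]
    [Nonempty n] [Field K] [IsAlgClosed K] {X Y : Matrix n n K} {w : K} (hX : IsUnit X)
    (hY : IsUnit Y) (hw : IsPrimitiveRoot w 3) (hYX : Y * X = w • (X * Y)) {i j : ℕ}
    (hij : ¬(3 ∣ i ∧ 3 ∣ j)) :
    ∃ a b d : K, a ≠ b ∧ a ≠ d ∧ b ≠ d ∧ Module.End.HasEigenvalue (X ^ i * Y ^ j).mulVecLin a ∧
      Module.End.HasEigenvalue (X ^ i * Y ^ j).mulVecLin b ∧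
      Module.End.HasEigenvalue (X ^ i * Y ^ j).mulVecLin d := by
  have hXY := (hX.pow i).mul (hY.pow j)
  have hprim {k : ℕ} (hk : ¬3 ∣ k) : IsPrimitiveRoot (w ^ k) 3 :=
    hw.pow_of_coprime k ((Nat.Prime.coprime_iff_not_dvd Nat.prime_three).mpr hk).symm
  by_cases hi : 3 ∣ i
  · exact exists_three_eigenvalues_of_mul_eq_smul_mul hXY hX (hprim fun hj => hij ⟨hi, hj⟩)
      (pow_mul_pow_mul_eq_smul hYX i j)
  · exact exists_three_eigenvalues_of_mul_eq_smul_mul hXY hY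
      ((hprim hi).pow_of_coprime 2 (by norm_num)) (pow_mul_pow_mul_eq_sq_smul hYX hw.pow_eq_one i j)

theorem GeneralLinearGroup.mk'_center_eq_of_val_eq_smul {n K : Type*} [Fintype n]
    [DecidableEq n] [CommRing K] {x y : GL n K} (u : Kˣ)
    (h : (x : Matrix n n K) = (u : K) • (y : Matrix n n K)) :
    QuotientGroup.mk' (Subgroup.center (GL n K)) x = QuotientGroup.mk' _ y :=
  (ProjGenLinGroup.mk_eq_mk_iff.mpr ⟨u, Units.ext <| by
    rw [Units.val_mul, GeneralLinearGroup.coe_scalar, scalar_apply, ← smul_eq_mul_diagonal,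
      h]⟩).symm

end Matrix

theorem Subgroup.exists_pow_mul_pow_of_mem_closure_pair {G : Type*} [Group G] {a b g : G}
    (hab : Commute a b) (ha : IsOfFinOrder a) (hb : IsOfFinOrder b)
    (hg : g ∈ closure {a, b}) : ∃ m n : ℕ, a ^ m * b ^ n = g := by
  rw [← mem_toSubmonoid, closure_toSubmonoid_of_isOfFinOrder (by simp [ha, hb])] at hg
  induction hg using Submonoid.closure_induction with
  | mem x hx =>
    rcases hx with rfl | rfl
    · exact ⟨1, 0, by simp⟩
    · exact ⟨0, 1, by simp⟩
  | one => exact ⟨0, 0, by simp⟩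
  | mul x y _ _ hx hy =>
    obtain ⟨i, j, rfl⟩ := hx
    obtain ⟨k, l, rfl⟩ := hy
    exact ⟨i + k, j + l, by rw [pow_add, pow_add, (hab.pow_pow k j).symm.mul_mul_mul_comm]⟩

def shiftMatrix3 (R : Type*) [Zero R] [One R] : Matrix (Fin 3) (Fin 3) R :=
  !![0,0,1; 1,0,0; 0,1,0]

def clockMatrix3 {R : Type*} [Zero R] [Monoid R] (w : R) : Matrix (Fin 3) (Fin 3) R :=
  !![1,0,0; 0,w,0; 0,0,w^2]

section ClockShift

variable {R : Type*} [CommRing R]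

theorem shiftMatrix3_pow_three : shiftMatrix3 R ^ 3 = 1 := by
  simp [shiftMatrix3, pow_succ, one_fin_three]

theorem clockMatrix3_pow_three {w : R} (hw : w ^ 3 = 1) : clockMatrix3 w ^ 3 = 1 := by
  simp [clockMatrix3, pow_succ, one_fin_three]
  exact ⟨by linear_combination hw, by linear_combination (w ^ 3 + 1) * hw⟩

theorem clockMatrix3_mul_shiftMatrix3 {w : R} (hw : w ^ 3 = 1) :
    clockMatrix3 w * shiftMatrix3 R = w • (shiftMatrix3 R * clockMatrix3 w) := by
  simp [clockMatrix3, shiftMatrix3]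
  exact ⟨by linear_combination -hw, sq w⟩

end ClockShift

/-- Every nontrivial element of the subgroup of `PGL₃(ℂ)` generated by the images of the
cyclic permutation matrix `A` and `B = diag(1, w, w²)`, `w = e^{2πi/3}`, has a matrix
representative with 3 distinct eigenvalues. -/
theorem stmt6 (w : ℂ) (hw : w = Complex.exp (2 * Real.pi * Complex.I / 3))
    (A B : GL (Fin 3) ℂ)
    (hA : (A : Matrix (Fin 3) (Fin 3) ℂ) = !![0,0,1; 1,0,0; 0,1,0])
    (hB : (B : Matrix (Fin 3) (Fin 3) ℂ) = !![1,0,0; 0,w,0; 0,0,w^2])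
    (g : PGL3) (hg : g ∈ Subgroup.closure {pgl3mk A, pgl3mk B}) (hg1 : g ≠ 1) :
    ∃ M : GL (Fin 3) ℂ, pgl3mk M = g ∧
      ∃ a b c : ℂ, a ≠ b ∧ a ≠ c ∧ b ≠ c ∧
        Module.End.HasEigenvalue (Matrix.mulVecLin (M : Matrix (Fin 3) (Fin 3) ℂ)) a ∧
        Module.End.HasEigenvalue (Matrix.mulVecLin (M : Matrix (Fin 3) (Fin 3) ℂ)) b ∧
        Module.End.HasEigenvalue (Matrix.mulVecLin (M : Matrix (Fin 3) (Fin 3) ℂ)) c := by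
  have hζ : IsPrimitiveRoot w 3 := by
    simpa [hw] using Complex.isPrimitiveRoot_exp 3 three_ne_zero
  have hw3 : w ^ 3 = 1 := hζ.pow_eq_one
  have hBA : (B * A : Matrix (Fin 3) (Fin 3) ℂ) = w • (A * B) := by
    rw [hA, hB]; exact clockMatrix3_mul_shiftMatrix3 hw3
  have hcomm : Commute (pgl3mk A) (pgl3mk B) := by
    rw [Commute, SemiconjBy, ← map_mul, ← map_mul]
    exact (GeneralLinearGroup.mk'_center_eq_of_val_eq_smul (hζ.isUnit three_ne_zero).unit hBA).symm
  have ha : pgl3mk A ^ 3 = 1 := by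
    have hA3 : A ^ 3 = 1 :=
      Units.ext <| by rw [Units.val_pow_eq_pow_val, hA]; exact shiftMatrix3_pow_three
    rw [← map_pow, hA3, map_one]
  have hb : pgl3mk B ^ 3 = 1 := by
    have hB3 : B ^ 3 = 1 :=
      Units.ext <| by rw [Units.val_pow_eq_pow_val, hB]; exact clockMatrix3_pow_three hw3
    rw [← map_pow, hB3, map_one]
  obtain ⟨m, n, rfl⟩ := Subgroup.exists_pow_mul_pow_of_mem_closure_pair hcomm
    (isOfFinOrder_iff_pow_eq_one.mpr ⟨3, three_pos, ha⟩)
    (isOfFinOrder_iff_pow_eq_one.mpr ⟨3, three_pos, hb⟩) hg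
  refine ⟨A ^ m * B ^ n, by simp, ?_⟩
  simp only [Units.val_mul, Units.val_pow_eq_pow_val]
  refine exists_three_eigenvalues_pow_mul_pow A.isUnit B.isUnit hζ hBA ?_
  rintro ⟨⟨k, rfl⟩, ⟨l, rfl⟩⟩
  exact hg1 (by rw [pow_mul, pow_mul, ha, hb, one_pow, one_pow, one_mul])
end

section
/- In the graded-commutative F_3-algebra R = Λ(y,y') ⊗ F_3[x,x'] (deg y = deg y' = 1, deg x = deg x' = 2), let I be the ideal generated by xy' − x'y and x^3 y' − x'^3 y; then in degree 7 of R/I, the image of y x x'^2 is not in the F_3-span of the images of y x^3, y' x'^3, y x^2 x'. -/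
noncomputable section

open MvPolynomial

/-- The polynomial part `𝔽₃[x, x']` (generators of degree 2). -/
abbrev GCP : Type := MvPolynomial (Fin 2) (ZMod 3)

/-- The graded-commutative algebra `R = Λ(y, y') ⊗ 𝔽₃[x, x']`, realized as the exterior
algebra over `𝔽₃[x, x']` on two generators `y, y'`. -/
abbrev GCR : Type := ExteriorAlgebra GCP (Fin 2 → GCP)

/-- The degree-2 generator `x`. -/
def gx : GCR := algebraMap GCP GCR (X 0)

/-- The degree-2 generator `x'`. -/
def gx' : GCR := algebraMap GCP GCR (X 1)

/-- The degree-1 exterior generator `y`. -/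
def gy : GCR := ExteriorAlgebra.ι GCP (Pi.single 0 1)

/-- The degree-1 exterior generator `y'`. -/
def gy' : GCR := ExteriorAlgebra.ι GCP (Pi.single 1 1)

/-- The relations generating the ideal `I = (x y' − x' y, x³ y' − x'³ y)`. -/
def gcRel : GCR → GCR → Prop := fun a b =>
  (a = gx * gy' ∧ b = gx' * gy) ∨ (a = gx ^ 3 * gy' ∧ b = gx' ^ 3 * gy)

set_option synthInstance.maxHeartbeats 1000000
set_option maxHeartbeats 2000000

def pRel : GCP := X 0 ^ 3 * X 1 - X 0 * X 1 ^ 3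

abbrev AA : Type := GCP ⧸ Ideal.span {pRel}

abbrev SS : Type := TrivSqZeroExt AA AA

instance : CommRing AA := inferInstance
instance : Algebra GCP AA := inferInstance
instance : CommRing SS := inferInstance
instance : Algebra GCP SS := inferInstance
instance : Module AA AA := inferInstance
instance : Module AAᵐᵒᵖ AA := inferInstance

def qm : GCP →ₗ[GCP] AA := Submodule.mkQ _

theorem qm_eq (f : GCP) : qm f = Ideal.Quotient.mk (Ideal.span {pRel}) f := rfl

def ιS : (Fin 2 → GCP) →ₗ[GCP] SS where
  toFun m := TrivSqZeroExt.inr (qm (m 0 * X 0 + m 1 * X 1))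
  map_add' a b := by
    simp only [Pi.add_apply, add_mul, map_add, TrivSqZeroExt.inr_add]
    abel
  map_smul' c m := by
    have h : (c • m) 0 * X 0 + (c • m) 1 * X 1 = c • (m 0 * X 0 + m 1 * X 1) := by
      simp [smul_eq_mul, mul_add, mul_assoc]
    rw [h, map_smul, TrivSqZeroExt.inr_smul, RingHom.id_apply]

theorem ιS_sq (m : Fin 2 → GCP) : ιS m * ιS m = 0 := by
  show TrivSqZeroExt.inr _ * TrivSqZeroExt.inr _ = 0
  exact TrivSqZeroExt.inr_mul_inr _ _ _

def φ : GCR →ₐ[GCP] SS := ExteriorAlgebra.lift GCP ⟨ιS, ιS_sq⟩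

theorem phi_x : φ gx = TrivSqZeroExt.inl (Ideal.Quotient.mk _ (X 0)) := by
  show φ (algebraMap GCP GCR (X 0)) = _
  rw [AlgHom.commutes]
  rfl

theorem phi_x' : φ gx' = TrivSqZeroExt.inl (Ideal.Quotient.mk _ (X 1)) := by
  show φ (algebraMap GCP GCR (X 1)) = _
  rw [AlgHom.commutes]
  rfl

theorem phi_y : φ gy = TrivSqZeroExt.inr (Ideal.Quotient.mk _ (X 0)) := by
  show φ (ExteriorAlgebra.ι GCP (Pi.single 0 1)) = _
  rw [show (φ : GCR →ₐ[GCP] SS) = ExteriorAlgebra.lift GCP ⟨ιS, ιS_sq⟩ from rfl,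
    ExteriorAlgebra.lift_ι_apply]
  show TrivSqZeroExt.inr (qm _) = _
  rw [qm_eq]
  norm_num [Pi.single_apply]

theorem phi_y' : φ gy' = TrivSqZeroExt.inr (Ideal.Quotient.mk _ (X 1)) := by
  show φ (ExteriorAlgebra.ι GCP (Pi.single 1 1)) = _
  rw [show (φ : GCR →ₐ[GCP] SS) = ExteriorAlgebra.lift GCP ⟨ιS, ιS_sq⟩ from rfl,
    ExteriorAlgebra.lift_ι_apply]
  show TrivSqZeroExt.inr (qm _) = _
  rw [qm_eq]
  norm_num [Pi.single_apply]

theorem inl_mul_inr' (r m : AA) :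
    (TrivSqZeroExt.inl r : SS) * TrivSqZeroExt.inr m = TrivSqZeroExt.inr (r * m) := by
  rw [TrivSqZeroExt.inl_mul_inr, smul_eq_mul]

theorem inr_mul_inl' (r m : AA) :
    (TrivSqZeroExt.inr m : SS) * TrivSqZeroExt.inl r = TrivSqZeroExt.inr (r * m) := by
  rw [TrivSqZeroExt.inr_mul_inl, op_smul_eq_smul, smul_eq_mul]

theorem phi_rel : ∀ a b, gcRel a b → φ a = φ b := by
  rintro a b (⟨rfl, rfl⟩ | ⟨rfl, rfl⟩)
  · rw [map_mul, map_mul, phi_x, phi_x', phi_y, phi_y', inl_mul_inr', inl_mul_inr',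
      ← map_mul, ← map_mul, mul_comm]
  · rw [map_mul, map_mul, map_pow, map_pow, phi_x, phi_x', phi_y, phi_y',
      TrivSqZeroExt.inl_pow, TrivSqZeroExt.inl_pow, inl_mul_inr', inl_mul_inr',
      ← map_pow, ← map_pow, ← map_mul, ← map_mul]
    congr 1
    rw [Ideal.Quotient.eq]
    have h2 : (X 0:GCP) ^ 3 * X 1 - X 1 ^ 3 * X 0 = pRel := by rw [pRel]; ring
    rw [h2]
    exact Ideal.subset_span rfl

def Fq : RingQuot gcRel →+* SS := RingQuot.lift ⟨φ.toRingHom, phi_rel⟩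

def mon : Fin 2 →₀ ℕ := Finsupp.single 0 2 + Finsupp.single 1 2

theorem hker : ∀ x ∈ (Ideal.span {pRel}).restrictScalars (ZMod 3),
    lcoeff (ZMod 3) mon x = 0 := by
  intro x hx
  rw [Submodule.restrictScalars_mem] at hx
  obtain ⟨a, rfl⟩ := Ideal.mem_span_singleton'.mp hx
  have hp : pRel = monomial (Finsupp.single 0 3 + Finsupp.single 1 1) 1
      - monomial (Finsupp.single 0 1 + Finsupp.single 1 3) 1 := by
    rw [pRel, show (X 0:GCP) ^ 3 * X 1 = X 0 ^ 3 * X 1 ^ 1 by ring,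
      show (X 0:GCP) * X 1 ^ 3 = X 0 ^ 1 * X 1 ^ 3 by ring,
      X_pow_eq_monomial, X_pow_eq_monomial, X_pow_eq_monomial, X_pow_eq_monomial,
      monomial_mul, monomial_mul, mul_one]
  rw [lcoeff_apply, hp, mul_sub, coeff_sub, coeff_mul_monomial', coeff_mul_monomial']
  rw [if_neg, if_neg, sub_zero]
  · intro h
    have h1 := h 1
    simp [mon, Finsupp.single_apply] at h1
  · intro h
    have h0 := h 0
    simp [mon, Finsupp.single_apply] at h0

def ℓq : AA →ₗ[ZMod 3] ZMod 3 :=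
  (Submodule.liftQ ((Ideal.span {pRel}).restrictScalars (ZMod 3)) (lcoeff (ZMod 3) mon) hker) ∘ₗ
    (Submodule.Quotient.restrictScalarsEquiv (ZMod 3)
      (Ideal.span {pRel} : Submodule GCP GCP)).symm.toLinearMap

theorem ℓq_mk (f : GCP) : ℓq (Ideal.Quotient.mk (Ideal.span {pRel}) f) = coeff mon f := rfl

def T : RingQuot gcRel →+ ZMod 3 :=
  ℓq.toAddMonoidHom.comp ((TrivSqZeroExt.sndHom AA AA).toAddMonoidHom.comp Fq.toAddMonoidHom)

theorem T_apply (w : GCR) : T (RingQuot.mkRingHom gcRel w) = ℓq (TrivSqZeroExt.snd (φ w)) := by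
  show ℓq (TrivSqZeroExt.snd (Fq (RingQuot.mkRingHom gcRel w))) = _
  rw [Fq, RingQuot.lift_mkRingHom_apply]
  rfl

/-- In `R/I`, where `R = Λ(y,y') ⊗ 𝔽₃[x,x']` and `I = (xy' − x'y, x³y' − x'³y)`, the image
of `y x x'²` is not in the span (over the prime field; equivalently the `ℤ`-span, since
the ring has characteristic 3) of the images of `y x³`, `y' x'³`, and `y x² x'`. -/
theorem stmt18 :
    RingQuot.mkRingHom gcRel (gy * gx * gx' ^ 2) ∉
      Submodule.span ℤ {RingQuot.mkRingHom gcRel (gy * gx ^ 3),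
        RingQuot.mkRingHom gcRel (gy' * gx' ^ 3),
        RingQuot.mkRingHom gcRel (gy * gx ^ 2 * gx')} := by
  intro h
  have coeff_pow : ∀ a b : ℕ, coeff mon (X 0 ^ a * X 1 ^ b : GCP) =
      if Finsupp.single 0 a + Finsupp.single 1 b = mon then 1 else 0 := by
    intro a b
    rw [X_pow_eq_monomial, X_pow_eq_monomial, monomial_mul, mul_one, coeff_monomial]
  have e1 : T (RingQuot.mkRingHom gcRel (gy * gx ^ 3)) = 0 := by
    rw [T_apply, map_mul, map_pow, phi_y, phi_x, TrivSqZeroExt.inl_pow, inr_mul_inl',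
      ← map_pow, ← map_mul, TrivSqZeroExt.snd_inr, ℓq_mk,
      show (X 0 ^ 3 * X 0 : GCP) = X 0 ^ 4 * X 1 ^ 0 by ring, coeff_pow, if_neg]
    intro hh
    have := DFunLike.congr_fun hh 1
    simp [mon, Finsupp.single_apply] at this
  have e2 : T (RingQuot.mkRingHom gcRel (gy' * gx' ^ 3)) = 0 := by
    rw [T_apply, map_mul, map_pow, phi_y', phi_x', TrivSqZeroExt.inl_pow, inr_mul_inl',
      ← map_pow, ← map_mul, TrivSqZeroExt.snd_inr, ℓq_mk,
      show (X 1 ^ 3 * X 1 : GCP) = X 0 ^ 0 * X 1 ^ 4 by ring, coeff_pow, if_neg]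
    intro hh
    have := DFunLike.congr_fun hh 0
    simp [mon, Finsupp.single_apply] at this
  have e3 : T (RingQuot.mkRingHom gcRel (gy * gx ^ 2 * gx')) = 0 := by
    rw [T_apply, map_mul, map_mul, map_pow, phi_y, phi_x, phi_x', TrivSqZeroExt.inl_pow,
      inr_mul_inl', inr_mul_inl', ← map_pow, ← map_mul, ← map_mul, TrivSqZeroExt.snd_inr, ℓq_mk,
      show (X 1 * (X 0 ^ 2 * X 0) : GCP) = X 0 ^ 3 * X 1 ^ 1 by ring, coeff_pow, if_neg]
    intro hh
    have := DFunLike.congr_fun hh 0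
    simp [mon, Finsupp.single_apply] at this
  have e0 : T (RingQuot.mkRingHom gcRel (gy * gx * gx' ^ 2)) = 1 := by
    rw [T_apply, map_mul, map_mul, map_pow, phi_y, phi_x, phi_x', TrivSqZeroExt.inl_pow,
      inr_mul_inl', inr_mul_inl', ← map_pow, ← map_mul, ← map_mul, TrivSqZeroExt.snd_inr, ℓq_mk,
      show (X 1 ^ 2 * (X 0 * X 0) : GCP) = X 0 ^ 2 * X 1 ^ 2 by ring, coeff_pow, if_pos]
    rw [mon]
  have hmap := Submodule.mem_map_of_mem (f := T.toIntLinearMap) h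
  rw [Submodule.map_span, Set.image_insert_eq, Set.image_insert_eq, Set.image_singleton] at hmap
  simp only [AddMonoidHom.coe_toIntLinearMap] at hmap
  rw [e1, e2, e3, e0] at hmap
  simp at hmap

end
end
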